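/- Let d ∈ {2, 7, 11}, and let G ∈ U(2,1;O_d) be a matrix whose (3,1) entry g = G₃₁ is nonzero (equivalently, G does not fix q∞). Then |g| = 1 (equivalently, g is a unit of O_d, i.e. g = ±1) if and only if there exist matrices A, B ∈ U(2,1;O_d) fixing q∞ such that G = A·I₀·B. (This is the algebraic content of: an isometric sphere of an element of the Picard modular group has the largest possible radius √2 if and only if it is the image of the isometric sphere of I₀ under an element of the stabiliser of q∞.) -/

import Mathlib

noncomputable section

open Matrix Complex

/-- The Gram matrix `J` of the Hermitian form of signature (2,1). -/
def Jmat : Matrix (Fin 3) (Fin 3) ℂ := !![0,0,1; 0,1,0; 1,0,0]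

/-- The ring of integers `O_d` of `ℚ(√−d)` (for `d ≡ 2 (mod 4)` it is `ℤ[i√d]`, and for
`d ≡ 3 (mod 4)` it is `ℤ[ω_d]` with `ω_d = (1+i√d)/2`), as a subset of `ℂ`. -/
def Od (d : ℕ) : Set ℂ :=
  if d % 4 = 2 then
    {z | ∃ a b : ℤ, z = (a : ℂ) + (b : ℂ) * (Complex.I * ((√(d : ℝ)) : ℝ))}
  else
    {z | ∃ a b : ℤ, z = (a : ℂ) + (b : ℂ) * ((1 + Complex.I * ((√(d : ℝ)) : ℝ)) / 2)}

def I₀ : Matrix (Fin 3) (Fin 3) ℂ := !![0,0,1; 0,-1,0; 1,0,0]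

/-- A matrix `M ∈ U(2,1;O_d)` fixing `q∞`: entries in `O_d`, `Mᴴ J M = J`, and
`M·(1,0,0)ᵗ` is a scalar multiple of `(1,0,0)ᵗ`. -/
def FixesInfinity (d : ℕ) (M : Matrix (Fin 3) (Fin 3) ℂ) : Prop :=
  (∀ i j, M i j ∈ Od d) ∧ Mᴴ * Jmat * M = Jmat ∧
    ∃ c : ℂ, M.mulVec ![1,0,0] = c • ![1,0,0]

/-!
If `|g| = 1`, the bottom row `(g, α, β)` of `G` is isotropic (`G J Gᴴ = J`), so it is the top
row of a stabiliser element `B = stabOfRow g α β` of `q∞`. Then `A = G B⁻¹ I₀` sends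
`e₁ ↦ G B⁻¹ e₃ = G J Gᴴ e₃ = e₁`, and `B⁻¹ = J Bᴴ J` has entries in `O_d` because `O_d` is closed
under conjugation. Conversely, the `(3,1)` entry of `A I₀ B` is `A₃₃ B₁₁`, and the corners of a
stabiliser element satisfy `conj M₃₃ · M₁₁ = 1`; norms of elements of `O_d` are rational
integers, so both corners have norm `1`.
-/

open ComplexConjugate

def intSpan (θ : ℂ) : Set ℂ := {z | ∃ a b : ℤ, z = a + b * θ}

namespace intSpan

variable {θ z w : ℂ}

lemma intCast_mem (k : ℤ) : (k : ℂ) ∈ intSpan θ := ⟨k, 0, by simp⟩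

lemma add_mem (hz : z ∈ intSpan θ) (hw : w ∈ intSpan θ) : z + w ∈ intSpan θ := by
  obtain ⟨a, b, rfl⟩ := hz
  obtain ⟨c, e, rfl⟩ := hw
  exact ⟨a + c, b + e, by push_cast; ring⟩

lemma neg_mem (hz : z ∈ intSpan θ) : -z ∈ intSpan θ := by
  obtain ⟨a, b, rfl⟩ := hz
  exact ⟨-a, -b, by push_cast; ring⟩

lemma mul_mem {t n : ℤ} (hθ : θ * θ = t * θ - n) (hz : z ∈ intSpan θ) (hw : w ∈ intSpan θ) :
    z * w ∈ intSpan θ := by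
  obtain ⟨a, b, rfl⟩ := hz
  obtain ⟨c, e, rfl⟩ := hw
  refine ⟨a * c - n * b * e, a * e + b * c + t * b * e, ?_⟩
  push_cast
  linear_combination (b * e : ℂ) * hθ

lemma conj_mem {t : ℤ} (hθ : conj θ = t - θ) (hz : z ∈ intSpan θ) : conj z ∈ intSpan θ := by
  obtain ⟨a, b, rfl⟩ := hz
  refine ⟨a + t * b, -b, ?_⟩
  simp only [map_add, map_mul, map_intCast, hθ]
  push_cast
  ring

lemma exists_normSq_eq_intCast {t n : ℤ} (hθ : θ * θ = t * θ - n) (hθc : conj θ = t - θ)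
    (hz : z ∈ intSpan θ) : ∃ k : ℤ, normSq z = k := by
  obtain ⟨a, b, rfl⟩ := hz
  refine ⟨a ^ 2 + t * a * b + n * b ^ 2, ofReal_injective ?_⟩
  rw [← mul_conj]
  simp only [map_add, map_mul, map_intCast, hθc]
  push_cast
  linear_combination (-(b : ℂ) ^ 2) * hθ

end intSpan

lemma exists_Od_eq_intSpan {d : ℕ} (hd : d % 4 = 2 ∨ d % 4 = 3) :
    ∃ (θ : ℂ) (t n : ℤ), Od d = intSpan θ ∧ θ * θ = t * θ - n ∧ conj θ = t - θ := by
  have hsqrt : (I * (√(d : ℝ) : ℝ)) * (I * (√(d : ℝ) : ℝ)) = -(d : ℂ) := by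
    rw [mul_mul_mul_comm, I_mul_I, ← ofReal_mul, Real.mul_self_sqrt (Nat.cast_nonneg d)]
    simp
  have hconj : conj (I * (√(d : ℝ) : ℝ)) = -(I * (√(d : ℝ) : ℝ)) := by
    rw [map_mul, conj_I, conj_ofReal, neg_mul]
  rcases hd with h2 | h3
  · refine ⟨I * (√(d : ℝ) : ℝ), 0, d, by simp [Od, intSpan, h2], ?_, ?_⟩
    · rw [hsqrt]; push_cast; ring
    · rw [hconj]; push_cast; ring
  · obtain ⟨k, hk⟩ : ∃ k : ℕ, d + 1 = 4 * (k + 1) := ⟨d / 4, by omega⟩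
    refine ⟨(1 + I * (√(d : ℝ) : ℝ)) / 2, 1, k + 1, by simp [Od, intSpan, h3], ?_, ?_⟩
    · have hk' : (d : ℂ) + 1 = 4 * (k + 1) := by exact_mod_cast hk
      push_cast
      linear_combination hsqrt / 4 - hk' / 4
    · rw [map_div₀, map_add, map_one, hconj, map_ofNat]
      push_cast
      ring

def OdSubring (d : ℕ) (hd : d % 4 = 2 ∨ d % 4 = 3) : Subring ℂ where
  carrier := Od d
  mul_mem' {z w} := by
    obtain ⟨θ, t, n, hOd, hθ, -⟩ := exists_Od_eq_intSpan hd
    rw [hOd]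
    exact intSpan.mul_mem hθ
  one_mem' := by
    obtain ⟨θ, -, -, hOd, -⟩ := exists_Od_eq_intSpan hd
    simpa [hOd] using intSpan.intCast_mem (θ := θ) 1
  add_mem' {z w} := by
    obtain ⟨θ, -, -, hOd, -⟩ := exists_Od_eq_intSpan hd
    rw [hOd]
    exact intSpan.add_mem
  zero_mem' := by
    obtain ⟨θ, -, -, hOd, -⟩ := exists_Od_eq_intSpan hd
    simpa [hOd] using intSpan.intCast_mem (θ := θ) 0
  neg_mem' {z} := by
    obtain ⟨θ, -, -, hOd, -⟩ := exists_Od_eq_intSpan hd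
    rw [hOd]
    exact intSpan.neg_mem

section OdSubring

variable {d : ℕ} (hd : d % 4 = 2 ∨ d % 4 = 3) {z : ℂ}

lemma conj_mem_OdSubring (hz : z ∈ OdSubring d hd) : conj z ∈ OdSubring d hd := by
  obtain ⟨θ, _, _, hOd, -, hθc⟩ := exists_Od_eq_intSpan hd
  change z ∈ Od d at hz
  change conj z ∈ Od d
  rw [hOd] at hz ⊢
  exact intSpan.conj_mem hθc hz

lemma exists_normSq_eq_intCast_of_mem_OdSubring (hz : z ∈ OdSubring d hd) :
    ∃ k : ℤ, normSq z = k := by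
  obtain ⟨θ, _, _, hOd, hθ, hθc⟩ := exists_Od_eq_intSpan hd
  change z ∈ Od d at hz
  rw [hOd] at hz
  exact intSpan.exists_normSq_eq_intCast hθ hθc hz

end OdSubring

def U21 : Submonoid (Matrix (Fin 3) (Fin 3) ℂ) where
  carrier := {M | Mᴴ * Jmat * M = Jmat}
  one_mem' := by simp
  mul_mem' {M N} (hM : Mᴴ * Jmat * M = Jmat) (hN : Nᴴ * Jmat * N = Jmat) := by
    change (M * N)ᴴ * Jmat * (M * N) = Jmat
    calc (M * N)ᴴ * Jmat * (M * N) = Nᴴ * (Mᴴ * Jmat * M) * N := by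
          simp only [conjTranspose_mul, Matrix.mul_assoc]
      _ = Jmat := by rw [hM, hN]

lemma conjTranspose_Jmat : Jmatᴴ = Jmat := by
  ext i j; fin_cases i <;> fin_cases j <;> simp [Jmat]

lemma Jmat_mul_Jmat : Jmat * Jmat = 1 := by
  ext i j; fin_cases i <;> fin_cases j <;> simp [Jmat, mul_apply, Fin.sum_univ_three, one_apply]

lemma I₀_mul_I₀ : I₀ * I₀ = 1 := by
  ext i j; fin_cases i <;> fin_cases j <;> simp [I₀, mul_apply, Fin.sum_univ_three, one_apply]

lemma I₀_mem_U21 : I₀ ∈ U21 := by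
  change I₀ᴴ * Jmat * I₀ = Jmat
  ext i j; fin_cases i <;> fin_cases j <;> simp [I₀, Jmat, mul_apply, Fin.sum_univ_three]

section U21

variable {M : Matrix (Fin 3) (Fin 3) ℂ}

lemma Jmat_mul_conjTranspose_mul_Jmat_mul (hM : M ∈ U21) : Jmat * Mᴴ * Jmat * M = 1 := by
  calc Jmat * Mᴴ * Jmat * M = Jmat * (Mᴴ * Jmat * M) := by simp only [Matrix.mul_assoc]
    _ = 1 := by rw [hM.out, Jmat_mul_Jmat]

lemma mul_Jmat_mul_conjTranspose (hM : M ∈ U21) : M * Jmat * Mᴴ = Jmat := by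
  have h : M * (Jmat * Mᴴ * Jmat) = 1 :=
    mul_eq_one_comm.mp (Jmat_mul_conjTranspose_mul_Jmat_mul hM)
  calc M * Jmat * Mᴴ = M * (Jmat * Mᴴ * Jmat) * Jmat := by
        simp only [Matrix.mul_assoc, Jmat_mul_Jmat, Matrix.mul_one]
    _ = Jmat := by rw [h, Matrix.one_mul]

lemma Jmat_mul_conjTranspose_mul_Jmat_mem (hM : M ∈ U21) : Jmat * Mᴴ * Jmat ∈ U21 := by
  change (Jmat * Mᴴ * Jmat)ᴴ * Jmat * (Jmat * Mᴴ * Jmat) = Jmat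
  calc (Jmat * Mᴴ * Jmat)ᴴ * Jmat * (Jmat * Mᴴ * Jmat)
        = Jmat * (M * (Jmat * Jmat) * Jmat * Mᴴ) * Jmat := by
          simp only [conjTranspose_mul, conjTranspose_conjTranspose, conjTranspose_Jmat,
            Matrix.mul_assoc]
    _ = Jmat := by
          rw [Jmat_mul_Jmat, Matrix.mul_one, mul_Jmat_mul_conjTranspose hM, Jmat_mul_Jmat,
            Matrix.one_mul]

lemma exists_mulVec_eq_smul_iff :
    (∃ c : ℂ, M *ᵥ ![1, 0, 0] = c • ![1, 0, 0]) ↔ M 1 0 = 0 ∧ M 2 0 = 0 := by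
  constructor
  · rintro ⟨c, hc⟩
    have h1 := congrFun hc 1
    have h2 := congrFun hc 2
    simp_all [mulVec, dotProduct, Fin.sum_univ_three]
  · rintro ⟨h1, h2⟩
    refine ⟨M 0 0, funext fun i => ?_⟩
    fin_cases i <;> simp [mulVec, dotProduct, Fin.sum_univ_three, h1, h2]

lemma conj_corner_mul_corner_eq_one (hM : M ∈ U21) (h1 : M 1 0 = 0) (h2 : M 2 0 = 0) :
    conj (M 2 2) * M 0 0 = 1 := by
  have h := congrFun (congrFun hM.out 2) 0
  simpa [mul_apply, Fin.sum_univ_three, Jmat, h1, h2] using h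

end U21

section SubringMatrix

variable (S : Subring ℂ)

lemma Jmat_mem_matrix : Jmat ∈ S.matrix := by
  intro i j; fin_cases i <;> fin_cases j <;> simp [Jmat, S.zero_mem, S.one_mem]

lemma I₀_mem_matrix : I₀ ∈ S.matrix := by
  intro i j; fin_cases i <;> fin_cases j <;> simp [I₀, S.zero_mem, S.one_mem, S.neg_mem]

lemma conjTranspose_mem_matrix (hS : ∀ z ∈ S, conj z ∈ S) {M : Matrix (Fin 3) (Fin 3) ℂ}
    (hM : M ∈ S.matrix) : Mᴴ ∈ S.matrix :=
  fun i j => hS _ (hM j i)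

end SubringMatrix

def stabOfRow (g α β : ℂ) : Matrix (Fin 3) (Fin 3) ℂ :=
  !![g, α, β; 0, 1, -(g * conj α); 0, 0, g]

section stabOfRow

variable {g α β : ℂ}

lemma stabOfRow_mem_U21 (hg : conj g * g = 1)
    (hrow : β * conj g + α * conj α + g * conj β = 0) : stabOfRow g α β ∈ U21 := by
  change _ = _
  ext i j
  fin_cases i <;> fin_cases j <;> simp [stabOfRow, Jmat, mul_apply, Fin.sum_univ_three, hg]
  · ring
  · linear_combination hrow + α * conj α * hg

lemma stabOfRow_mem_matrix {S : Subring ℂ} (hS : ∀ z ∈ S, conj z ∈ S) (hg : g ∈ S) (hα : α ∈ S)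
    (hβ : β ∈ S) : stabOfRow g α β ∈ S.matrix := by
  intro i j
  fin_cases i <;> fin_cases j <;> simp [stabOfRow, hg, hα, hβ, S.zero_mem, S.one_mem,
    S.mul_mem, hS]

lemma stabOfRow_mulVec : stabOfRow g α β *ᵥ ![1, 0, 0] = g • ![1, 0, 0] := by
  ext i; fin_cases i <;> simp [stabOfRow, mulVec, dotProduct, Fin.sum_univ_three]

lemma conjTranspose_stabOfRow_mulVec (M : Matrix (Fin 3) (Fin 3) ℂ) :
    (stabOfRow (M 2 0) (M 2 1) (M 2 2))ᴴ *ᵥ ![1, 0, 0] = Mᴴ *ᵥ ![0, 0, 1] := by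
  ext i; fin_cases i <;> simp [stabOfRow, mulVec, dotProduct, Fin.sum_univ_three]

end stabOfRow

section OdStabiliser

variable {d : ℕ}

theorem exists_fixesInfinity_mul_I₀_mul (hd : d % 4 = 2 ∨ d % 4 = 3) {G : Matrix (Fin 3) (Fin 3) ℂ}
    (hG : G ∈ (OdSubring d hd).matrix) (hU : G ∈ U21) (hg : ‖G 2 0‖ = 1) :
    ∃ A B : Matrix (Fin 3) (Fin 3) ℂ,
      FixesInfinity d A ∧ FixesInfinity d B ∧ G = A * I₀ * B := by
  set S := OdSubring d hd
  have hS : ∀ z ∈ S, conj z ∈ S := fun _ => conj_mem_OdSubring hd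
  have hGJG := mul_Jmat_mul_conjTranspose hU
  set B := stabOfRow (G 2 0) (G 2 1) (G 2 2)
  have hB : B ∈ U21 := by
    refine stabOfRow_mem_U21 (by simp [conj_mul', hg]) ?_
    simpa [mul_apply, Fin.sum_univ_three, Jmat] using congrFun (congrFun hGJG 2) 2
  have hBS : B ∈ S.matrix := stabOfRow_mem_matrix hS (hG 2 0) (hG 2 1) (hG 2 2)
  refine ⟨G * (Jmat * Bᴴ * Jmat) * I₀, B, ⟨?_, ?_, 1, ?_⟩,
    ⟨hBS, hB, G 2 0, stabOfRow_mulVec⟩, ?_⟩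
  · exact S.matrix.mul_mem (S.matrix.mul_mem hG (S.matrix.mul_mem (S.matrix.mul_mem
      (Jmat_mem_matrix S) (conjTranspose_mem_matrix S hS hBS)) (Jmat_mem_matrix S)))
      (I₀_mem_matrix S)
  · exact U21.mul_mem (U21.mul_mem hU (Jmat_mul_conjTranspose_mul_Jmat_mem hB)) I₀_mem_U21
  · have hJI₀ : (Jmat * I₀) *ᵥ ![1, 0, 0] = ![1, 0, 0] := by
      ext i; fin_cases i <;> simp [Jmat, I₀, mulVec, dotProduct, Fin.sum_univ_three]
    have hJ : Jmat *ᵥ ![0, 0, 1] = ![1, 0, 0] := by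
      ext i; fin_cases i <;> simp [Jmat, mulVec, dotProduct, Fin.sum_univ_three]
    calc (G * (Jmat * Bᴴ * Jmat) * I₀) *ᵥ ![1, 0, 0]
        = (G * Jmat) *ᵥ Bᴴ *ᵥ (Jmat * I₀) *ᵥ ![1, 0, 0] := by
          simp only [mulVec_mulVec, Matrix.mul_assoc]
      _ = (G * Jmat) *ᵥ Gᴴ *ᵥ ![0, 0, 1] := by rw [hJI₀, conjTranspose_stabOfRow_mulVec]
      _ = (1 : ℂ) • ![1, 0, 0] := by rw [mulVec_mulVec, hGJG, hJ, one_smul]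
  · calc G = G * (Jmat * Bᴴ * Jmat * B) := by
          rw [Jmat_mul_conjTranspose_mul_Jmat_mul hB, Matrix.mul_one]
      _ = G * (Jmat * Bᴴ * Jmat) * I₀ * I₀ * B := by
          simp only [Matrix.mul_assoc, I₀_mul_I₀, Matrix.one_mul]

lemma norm_eq_one_of_conj_mul_eq_one (hd : d % 4 = 2 ∨ d % 4 = 3) {x y : ℂ}
    (hx : x ∈ OdSubring d hd) (hy : y ∈ OdSubring d hd) (h : conj x * y = 1) :
    ‖x‖ = 1 ∧ ‖y‖ = 1 := by
  obtain ⟨k, hk⟩ := exists_normSq_eq_intCast_of_mem_OdSubring hd hx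
  obtain ⟨m, hm⟩ := exists_normSq_eq_intCast_of_mem_OdSubring hd hy
  have hkm : k * m = 1 := by
    have := congrArg normSq h
    rw [normSq_mul, normSq_conj, hk, hm, map_one] at this
    exact_mod_cast this
  have hk1 : k = 1 := Int.eq_one_of_mul_eq_one_right (by exact_mod_cast hk ▸ normSq_nonneg x) hkm
  have hm1 : m = 1 := by rwa [hk1, one_mul] at hkm
  simp [Complex.norm_def, hk, hm, hk1, hm1]

lemma FixesInfinity.norm_corners_eq_one (hd : d % 4 = 2 ∨ d % 4 = 3)
    {M : Matrix (Fin 3) (Fin 3) ℂ} (hM : FixesInfinity d M) : ‖M 0 0‖ = 1 ∧ ‖M 2 2‖ = 1 := by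
  obtain ⟨hMS, hMU, hMfix⟩ := hM
  obtain ⟨h1, h2⟩ := exists_mulVec_eq_smul_iff.mp hMfix
  exact (norm_eq_one_of_conj_mul_eq_one hd (hMS 2 2) (hMS 0 0)
    (conj_corner_mul_corner_eq_one hMU h1 h2)).symm

theorem norm_mul_I₀_mul_apply_two_zero (hd : d % 4 = 2 ∨ d % 4 = 3)
    {A B : Matrix (Fin 3) (Fin 3) ℂ} (hA : FixesInfinity d A) (hB : FixesInfinity d B) :
    ‖(A * I₀ * B) 2 0‖ = 1 := by
  obtain ⟨hB1, hB2⟩ := exists_mulVec_eq_smul_iff.mp hB.2.2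
  have hentry : (A * I₀ * B) 2 0 = A 2 2 * B 0 0 := by
    simp [mul_apply, Fin.sum_univ_three, I₀, hB1, hB2]
  rw [hentry, norm_mul, (hA.norm_corners_eq_one hd).2, (hB.norm_corners_eq_one hd).1, one_mul]

end OdStabiliser

theorem isometric_sphere_largest_iff_general
    (d : ℕ) (hd : d ∈ ({2, 7, 11} : Set ℕ))
    (G : Matrix (Fin 3) (Fin 3) ℂ)
    (hG : ∀ i j, G i j ∈ Od d)
    (hU : Gᴴ * Jmat * G = Jmat) :
    ‖G 2 0‖ = 1 ↔
      ∃ A B : Matrix (Fin 3) (Fin 3) ℂ,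
        FixesInfinity d A ∧ FixesInfinity d B ∧ G = A * I₀ * B := by
  have hd' : d % 4 = 2 ∨ d % 4 = 3 := by rcases hd with rfl | rfl | rfl <;> simp
  constructor
  · exact exists_fixesInfinity_mul_I₀_mul hd' hG hU
  · rintro ⟨A, B, hA, hB, rfl⟩
    exact norm_mul_I₀_mul_apply_two_zero hd' hA hB

/-- **Proposition 4.1 of the paper** (algebraic form): for `d ∈ {2,7,11}` and
`G ∈ U(2,1;O_d)` with `g = G₃₁ ≠ 0`, the isometric sphere of `G` has the largest radius
`√2` (i.e. `|g| = 1`) if and only if `G = A·I₀·B` for some `A, B ∈ U(2,1;O_d)` fixing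
`q∞`. -/
theorem isometric_sphere_largest_iff
    (d : ℕ) (hd : d ∈ ({2, 7, 11} : Set ℕ))
    (G : Matrix (Fin 3) (Fin 3) ℂ)
    (hG : ∀ i j, G i j ∈ Od d)
    (hU : Gᴴ * Jmat * G = Jmat)
    (hg : G 2 0 ≠ 0) :
    ‖G 2 0‖ = 1 ↔
      ∃ A B : Matrix (Fin 3) (Fin 3) ℂ,
        FixesInfinity d A ∧ FixesInfinity d B ∧ G = A * I₀ * B :=
  isometric_sphere_largest_iff_general d hd G hG hU

end
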